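/- Let n ≥ 1 and let i be a social path of length 2n on [N] that passes through exactly n+1 colors. Then i is strictly paired: every edge of i, as an unordered pair, occurs at exactly two indices k ∈ {1,…,2n}. -/

import Mathlib

/-!
Adding one step to a path adds at most one new color, and a new color is reached along an
edge that has not occurred before; hence a path through `n + 1` colors has at least `n`
distinct edges. A social path of length `2n` has each of these edges at least twice, which
uses up all `2n` indices, so each edge occurs exactly twice.
-/

open MeasureTheory ProbabilityTheory Matrix Filter

attribute [local instance] Classical.propDecidable

noncomputable section

/-- A *pattern* is a subset of the unit square `[0,1]²` whose topological
boundary has two-dimensional Lebesgue measure zero. -/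
def IsPattern (S : Set (ℝ × ℝ)) : Prop :=
  S ⊆ Set.Icc (0 : ℝ) 1 ×ˢ Set.Icc (0 : ℝ) 1 ∧ MeasureTheory.volume (frontier S) = 0

/-- Entry `(i, j)` (here `i j : Fin N` are the 0-based versions of the 1-based
matrix indices) of the `N × N` approximating matrix of the pattern `S` is *active*:
the open square `((j-1)/N, j/N) × ((N-i)/N, (N-i+1)/N)` (in 1-based indexing)
has intersection with `S` with nonempty interior. -/
def entryActive (S : Set (ℝ × ℝ)) (N : ℕ) (i j : Fin N) : Prop :=
  (interior (Set.Ioo (((j : ℕ) : ℝ) / N) ((((j : ℕ) : ℝ) + 1) / N) ×ˢ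
      Set.Ioo (((N : ℝ) - ((i : ℕ) : ℝ) - 1) / N) (((N : ℝ) - ((i : ℕ) : ℝ)) / N) ∩ S)).Nonempty

/-- The `N × N` approximating matrix of a pattern `S`, built from the family
`X` of random variables on `Ω`: the `(i,j)` entry is `X i j / √N` if the entry
is active and `0` otherwise. -/
def approxMatrix {Ω : Type*} (S : Set (ℝ × ℝ)) (X : ℕ → ℕ → Ω → ℝ) (N : ℕ) (ω : Ω) :
    Matrix (Fin N) (Fin N) ℝ :=
  Matrix.of fun i j =>
    if entryActive S N i j then X (i : ℕ) (j : ℕ) ω / Real.sqrt N else 0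

/-- A configuration of length `m` is a function `C : Fin m → Bool`, where
`C k = true` means the `k`-th letter is the starred letter `x*` and
`C k = false` means it is `x`.  `configProd C A` is the word `A^C`: the product
of `m` matrices whose `k`-th factor is `A` if `C k = false` and `Aᵀ` if `C k = true`. -/
def configProd {N m : ℕ} (C : Fin m → Bool) (A : Matrix (Fin N) (Fin N) ℝ) :
    Matrix (Fin N) (Fin N) ℝ :=
  (List.ofFn fun k => if C k then Aᵀ else A).prod

/-- The normalized trace `tr(A) = Tr(A)/N` of an `N × N` matrix. -/
def ntr {N : ℕ} (A : Matrix (Fin N) (Fin N) ℝ) : ℝ := A.trace / N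

/-- The family `X` consists of iid real random variables with mean `0`,
variance `1` and finite moments of all orders. -/
structure IIDEntries {Ω : Type*} [MeasurableSpace Ω] (μ : Measure Ω)
    (X : ℕ → ℕ → Ω → ℝ) : Prop where
  meas : ∀ a b, Measurable (X a b)
  indep : iIndepFun (fun p : ℕ × ℕ => X p.1 p.2) μ
  ident : ∀ a b, IdentDistrib (X a b) (X 0 0) μ μ
  mean_zero : ∫ ω, X 0 0 ω ∂μ = 0
  var_one : ∫ ω, (X 0 0 ω) ^ 2 ∂μ = 1
  moments : ∀ p : ℕ, Integrable (fun ω => (X 0 0 ω) ^ p) μ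

/-- A path `i : {1,…,m+1} → {1,…,N}` (0-indexed here) is closed if `i 1 = i (m+1)`. -/
def IsClosedPath {m N : ℕ} (i : Fin (m + 1) → Fin N) : Prop :=
  i 0 = i (Fin.last m)

/-- The `k`-th edge of a path, as an unordered pair. -/
def pathEdge {m N : ℕ} (i : Fin (m + 1) → Fin N) (k : Fin m) : Sym2 (Fin N) :=
  s(i k.castSucc, i k.succ)

/-- The number of indices at which the `k`-th edge of the path occurs. -/
def edgeCount {m N : ℕ} (i : Fin (m + 1) → Fin N) (k : Fin m) : ℕ :=
  (Finset.univ.filter fun l => pathEdge i l = pathEdge i k).card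

/-- A path is *social* if every edge, as an unordered pair, occurs at at least
two indices. -/
def Social {m N : ℕ} (i : Fin (m + 1) → Fin N) : Prop :=
  ∀ k, 2 ≤ edgeCount i k

/-- A path is *strictly paired* if every edge, as an unordered pair, occurs at
exactly two indices. -/
def StrictlyPaired {m N : ℕ} (i : Fin (m + 1) → Fin N) : Prop :=
  ∀ k, edgeCount i k = 2

/-- The number of colors a path passes through: the cardinality of its range. -/
def colors {m N : ℕ} (i : Fin (m + 1) → Fin N) : ℕ :=
  (Finset.univ.image i).card

/-- A path is *strictly polar paired* with respect to the configuration `C` if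
it is strictly paired and in each pair of equal edges one occurrence is starred
and the other unstarred. -/
def PolarPaired {m N : ℕ} (C : Fin m → Bool) (i : Fin (m + 1) → Fin N) : Prop :=
  StrictlyPaired i ∧ ∀ k l, k ≠ l → pathEdge i k = pathEdge i l → C k ≠ C l

/-- The constraints defining the path counting function: `i` is a closed path of
length `2n` on `[n+1]`, strictly polar paired w.r.t. `C`, passing through `n+1`
colors, and for each `k`: `(x (i k), x (i (k+1))) ∈ S` if `C k = x`, and
`(x (i (k+1)), x (i k)) ∈ S` if `C k = x*`. -/
def pathSatisfies (S : Set (ℝ × ℝ)) {n : ℕ} (C : Fin (2 * n) → Bool)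
    (x : Fin (n + 1) → ℝ) (i : Fin (2 * n + 1) → Fin (n + 1)) : Prop :=
  IsClosedPath i ∧ PolarPaired C i ∧ colors i = n + 1 ∧
    ∀ k : Fin (2 * n),
      if C k then (x (i k.succ), x (i k.castSucc)) ∈ S
      else (x (i k.castSucc), x (i k.succ)) ∈ S

/-- The path counting function `f_{S,C}^{n+1}`. -/
def pathCount (S : Set (ℝ × ℝ)) {n : ℕ} (C : Fin (2 * n) → Bool)
    (x : Fin (n + 1) → ℝ) : ℕ :=
  if Function.Injective x then
    (Finset.univ.filter fun i : Fin (2 * n + 1) → Fin (n + 1) => pathSatisfies S C x i).card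
  else 0

open Finset

theorem Fin.image_univ_eq_insert_last {β : Type*} [DecidableEq β] {m : ℕ}
    (f : Fin (m + 1) → β) :
    univ.image f = insert (f (Fin.last m)) (univ.image fun k : Fin m => f k.castSucc) := by
  ext b
  simp only [mem_image, mem_univ, true_and, mem_insert, Fin.exists_fin_succ']
  tauto

theorem mem_image_of_mem_pathEdge {m N : ℕ} (i : Fin (m + 1) → Fin N) (k : Fin m) {v : Fin N}
    (hv : v ∈ pathEdge i k) : v ∈ univ.image i := by
  rcases Sym2.mem_iff.mp hv with rfl | rfl <;> exact mem_image_of_mem i (mem_univ _)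

theorem colors_le_card_image_pathEdge_add_one {N : ℕ} :
    ∀ {m : ℕ} (i : Fin (m + 1) → Fin N), colors i ≤ #(univ.image (pathEdge i)) + 1
  | 0, i => by
    simp only [colors, Fin.image_univ_eq_insert_last, Fin.last_zero, univ_eq_empty,
      image_empty, insert_empty, card_singleton]
    omega
  | m + 1, i => by
    have ih := colors_le_card_image_pathEdge_add_one (Fin.init i)
    have hedges : univ.image (pathEdge i) =
        insert (pathEdge i (Fin.last m)) (univ.image (pathEdge (Fin.init i))) :=
      Fin.image_univ_eq_insert_last (pathEdge i)
    have hcolors : univ.image i = insert (i (Fin.last (m + 1))) (univ.image (Fin.init i)) :=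
      Fin.image_univ_eq_insert_last i
    unfold colors at ih ⊢
    rw [hedges, hcolors]
    by_cases hold : i (Fin.last (m + 1)) ∈ univ.image (Fin.init i)
    · rw [insert_eq_of_mem hold]
      exact ih.trans (Nat.add_le_add_right (card_le_card (subset_insert _ _)) 1)
    · have hnew : pathEdge i (Fin.last m) ∉ univ.image (pathEdge (Fin.init i)) := by
        intro hmem
        obtain ⟨k, -, hk⟩ := mem_image.mp hmem
        refine hold (mem_image_of_mem_pathEdge (Fin.init i) k ?_)
        rw [hk]
        exact Sym2.mem_mk_right _ _
      rw [card_insert_of_notMem hold, card_insert_of_notMem hnew]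
      omega

theorem card_fiber_eq_two_of_two_le {ι β : Type*} [Fintype ι] [DecidableEq β] (f : ι → β)
    (htwo : ∀ k, 2 ≤ #{l | f l = f k}) (hcard : Fintype.card ι ≤ 2 * #(univ.image f)) (k : ι) :
    #{l | f l = f k} = 2 := by
  have hfiber : ∀ b ∈ univ.image f, 2 ≤ #{l | f l = b} := by
    rintro b hb
    obtain ⟨l, -, rfl⟩ := mem_image.mp hb
    exact htwo l
  have hsum : ∑ _b ∈ univ.image f, 2 = ∑ b ∈ univ.image f, #{l | f l = b} := by
    refine le_antisymm (sum_le_sum hfiber) ?_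
    rw [← card_eq_sum_card_image, sum_const, smul_eq_mul, Nat.mul_comm]
    exact hcard
  exact ((sum_eq_sum_iff_of_le hfiber).mp hsum (f k) (mem_image_of_mem f (mem_univ k))).symm

theorem social_path_max_colors_strictly_paired_general {n N : ℕ}
    (i : Fin (2 * n + 1) → Fin N)
    (hsocial : Social i) (hcolors : colors i = n + 1) :
    StrictlyPaired i := by
  have hedges : n ≤ #(univ.image (pathEdge i)) := by
    have := colors_le_card_image_pathEdge_add_one i
    omega
  exact card_fiber_eq_two_of_two_le (pathEdge i) hsocial (by simpa using hedges)

/-- Let `n ≥ 1` and let `i` be a social closed path of length `2n` on `[N]`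
passing through exactly `n+1` colors.  Then `i` is strictly paired: every edge
occurs at exactly two indices. -/
theorem social_path_max_colors_strictly_paired {n N : ℕ} (hn : 1 ≤ n)
    (i : Fin (2 * n + 1) → Fin N) (hclosed : IsClosedPath i)
    (hsocial : Social i) (hcolors : colors i = n + 1) :
    StrictlyPaired i :=
  social_path_max_colors_strictly_paired_general i hsocial hcolors
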